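/- Let n ≥ 1. Every matrix Ξ ∈ Sp(2n,ℝ) is the product of two matrices of the form Ξ_{A,B,C}: there exist real symmetric n×n matrices A₁, C₁, A₂, C₂ and invertible real n×n matrices B₁, B₂ such that Ξ = Ξ_{A₁,B₁,C₁} · Ξ_{A₂,B₂,C₂}. -/

import Mathlib

open Matrix

noncomputable section

/-- The standard symplectic form matrix `σ = [[0, I], [-I, 0]]`. -/
def sigmaMat (n : ℕ) : Matrix (Fin n ⊕ Fin n) (Fin n ⊕ Fin n) ℝ :=
  Matrix.fromBlocks 0 1 (-1) 0

/-- Membership in the symplectic group: `Sᵀ σ S = σ`. -/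
def IsSymplectic {n : ℕ} (S : Matrix (Fin n ⊕ Fin n) (Fin n ⊕ Fin n) ℝ) : Prop :=
  Sᵀ * sigmaMat n * S = sigmaMat n

/-- The symplectic matrix `Ξ_{A,B,C} = [[B⁻¹, -B⁻¹C], [AB⁻¹, Bᵀ - AB⁻¹C]]`. -/
def Xi {n : ℕ} (A B C : Matrix (Fin n) (Fin n) ℝ) :
    Matrix (Fin n ⊕ Fin n) (Fin n ⊕ Fin n) ℝ :=
  Matrix.fromBlocks B⁻¹ (-(B⁻¹ * C)) (A * B⁻¹) (Bᵀ - A * B⁻¹ * C)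

open Polynomial in
lemma pencil_lemma {n : ℕ} (α γ : Matrix (Fin n) (Fin n) ℝ)
    (hsym : αᵀ * γ = γᵀ * α)
    (hrank : ∀ x : Fin n → ℝ, α *ᵥ x = 0 → γ *ᵥ x = 0 → x = 0) :
    ∃ t : ℝ, IsUnit (α + t • γ).det := by
  by_contra hcon
  push_neg at hcon
  have hdet0 : ∀ t : ℝ, (α + t • γ).det = 0 := by
    intro t
    have := hcon t
    rwa [isUnit_iff_ne_zero, not_not] at this
  set M : Matrix (Fin n) (Fin n) ℝ[X] :=
    α.map Polynomial.C + (Polynomial.X : ℝ[X]) • γ.map Polynomial.C with hM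
  have hmap : ∀ t : ℝ, M.map (Polynomial.evalRingHom t) = α + t • γ := by
    intro t
    ext i j
    simp [hM, Matrix.map_apply, Matrix.add_apply, Matrix.smul_apply, smul_eq_mul]
    ring
  have hMdet : M.det = 0 := by
    apply Polynomial.zero_of_eval_zero
    intro t
    have := (Polynomial.evalRingHom t).map_det M
    rw [RingHom.mapMatrix_apply, hmap t, hdet0 t] at this
    simpa using this
  obtain ⟨v, hv0, hMv⟩ := (Matrix.exists_mulVec_eq_zero_iff).2 hMdet
  -- evaluated vector
  set xt : ℝ → Fin n → ℝ := fun t i => (v i).eval t with hxt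
  have hker : ∀ t : ℝ, (α + t • γ) *ᵥ (xt t) = 0 := by
    intro t
    funext j
    have h1 : Polynomial.eval t ((M *ᵥ v) j) = 0 := by rw [hMv]; simp
    calc ((α + t • γ) *ᵥ xt t) j
        = ∑ i, (α j i + t * γ j i) * (v i).eval t := by
          simp [Matrix.mulVec, dotProduct, Matrix.add_apply, Matrix.smul_apply, hxt]
      _ = Polynomial.eval t ((M *ᵥ v) j) := by
          simp only [Matrix.mulVec, dotProduct, hM, Matrix.add_apply,
            Matrix.smul_apply, Polynomial.eval_finset_sum, Polynomial.eval_mul,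
            Polynomial.eval_add, Polynomial.eval_C, Matrix.map_apply, smul_eq_mul,
            Polynomial.eval_X]
          try
            apply Finset.sum_congr rfl
            intro i _
            ring
      _ = 0 := h1
  have hp : ∀ t : ℝ, α *ᵥ (xt t) = -(t • (γ *ᵥ (xt t))) := by
    intro t
    have := hker t
    rw [Matrix.add_mulVec, Matrix.smul_mulVec] at this
    linear_combination (norm := module) this
  -- isotropy
  have hiso : ∀ s t : ℝ,
      (α *ᵥ xt s) ⬝ᵥ (γ *ᵥ xt t) = (γ *ᵥ xt s) ⬝ᵥ (α *ᵥ xt t) := by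
    intro s t
    have e1 : (α *ᵥ xt s) ⬝ᵥ (γ *ᵥ xt t) = ((γᵀ * α) *ᵥ xt s) ⬝ᵥ xt t := by
      rw [Matrix.dotProduct_mulVec, ← Matrix.mulVec_transpose, Matrix.mulVec_mulVec]
    have e2 : (γ *ᵥ xt s) ⬝ᵥ (α *ᵥ xt t) = ((αᵀ * γ) *ᵥ xt s) ⬝ᵥ xt t := by
      rw [Matrix.dotProduct_mulVec, ← Matrix.mulVec_transpose, Matrix.mulVec_mulVec]
    rw [e1, e2, hsym]
  have hQ : ∀ s t : ℝ, s ≠ t → (γ *ᵥ xt s) ⬝ᵥ (γ *ᵥ xt t) = 0 := by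
    intro s t hst
    have := hiso s t
    rw [hp s, hp t] at this
    rw [neg_dotProduct, dotProduct_neg, smul_dotProduct,
      dotProduct_smul, smul_eq_mul, smul_eq_mul] at this
    have h3 : (s - t) * ((γ *ᵥ xt s) ⬝ᵥ (γ *ᵥ xt t)) = 0 := by ring_nf; linarith [this]
    rcases mul_eq_zero.1 h3 with h | h
    · exact absurd (sub_eq_zero.1 h) hst
    · exact h
  -- polynomial vanishing to get the diagonal
  have hQdiag : ∀ t : ℝ, (γ *ᵥ xt t) ⬝ᵥ (γ *ᵥ xt t) = 0 := by
    intro t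
    set w : Fin n → ℝ := γ *ᵥ xt t with hw
    set P : ℝ[X] := ∑ i, Polynomial.C (w i) * ((γ.map Polynomial.C) *ᵥ v) i with hP
    have hPeval : ∀ s : ℝ, P.eval s = (γ *ᵥ xt s) ⬝ᵥ w := by
      intro s
      simp [hP, Polynomial.eval_finset_sum, Matrix.mulVec, dotProduct, hxt,
        Finset.mul_sum, dotProduct_comm, mul_comm]
    have hP0 : P = 0 := by
      apply Polynomial.eq_zero_of_infinite_isRoot
      apply Set.Infinite.mono (s := {s : ℝ | s ≠ t})
      · intro s hs
        simp only [Set.mem_setOf_eq, Polynomial.IsRoot]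
        rw [hPeval s]
        exact hQ s t hs
      · exact Set.Finite.infinite_compl (Set.finite_singleton t)
    have := hPeval t
    rw [hP0] at this
    rw [Polynomial.eval_zero] at this
    exact this.symm
  have hxt0 : ∀ t : ℝ, xt t = 0 := by
    intro t
    have hγ : γ *ᵥ xt t = 0 := dotProduct_self_eq_zero.1 (hQdiag t)
    have hα : α *ᵥ xt t = 0 := by rw [hp t, hγ]; simp
    exact hrank _ hα hγ
  apply hv0
  funext i
  apply Polynomial.zero_of_eval_zero
  intro t
  exact congrFun (hxt0 t) i

lemma sigma_mul_sigma (n : ℕ) : sigmaMat n * sigmaMat n = -1 := by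
  simp only [sigmaMat, Matrix.fromBlocks_multiply]
  rw [← Matrix.fromBlocks_one (l := Fin n) (m := Fin n) (α := ℝ), Matrix.fromBlocks_neg]
  simp

lemma sigma_isUnit (n : ℕ) : IsUnit (sigmaMat n) := by
  refine ⟨⟨sigmaMat n, -(sigmaMat n), ?_, ?_⟩, rfl⟩
  · rw [Matrix.mul_neg, sigma_mul_sigma, neg_neg]
  · rw [Matrix.neg_mul, sigma_mul_sigma, neg_neg]

lemma IsSymplectic.det_isUnit {n : ℕ} {S : Matrix (Fin n ⊕ Fin n) (Fin n ⊕ Fin n) ℝ}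
    (hS : IsSymplectic S) : IsUnit S.det := by
  have hσ : IsUnit (sigmaMat n).det :=
    (Matrix.isUnit_iff_isUnit_det _).1 (sigma_isUnit n)
  have h1 := congrArg Matrix.det hS
  rw [Matrix.det_mul, Matrix.det_mul, Matrix.det_transpose] at h1
  have h2 : S.det * S.det = 1 := by
    have hne : (sigmaMat n).det ≠ 0 := hσ.ne_zero
    apply mul_right_cancel₀ hne
    linear_combination h1
  exact IsUnit.of_mul_eq_one _ h2

lemma IsSymplectic.other {n : ℕ} {S : Matrix (Fin n ⊕ Fin n) (Fin n ⊕ Fin n) ℝ}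
    (hS : IsSymplectic S) : S * sigmaMat n * Sᵀ = sigmaMat n := by
  have hS' : Sᵀ * sigmaMat n * S = sigmaMat n := hS
  have hB : (-(sigmaMat n) * Sᵀ * sigmaMat n) * S = 1 := by
    calc (-(sigmaMat n) * Sᵀ * sigmaMat n) * S
        = -(sigmaMat n) * (Sᵀ * sigmaMat n * S) := by noncomm_ring
      _ = 1 := by rw [hS', Matrix.neg_mul, sigma_mul_sigma, neg_neg]
  have hcomm : S * (-(sigmaMat n) * Sᵀ * sigmaMat n) = 1 := mul_eq_one_comm.1 hB
  have hT : (S * (-(sigmaMat n)) * Sᵀ) * sigmaMat n = 1 := by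
    calc (S * (-(sigmaMat n)) * Sᵀ) * sigmaMat n
        = S * (-(sigmaMat n) * Sᵀ * sigmaMat n) := by noncomm_ring
      _ = 1 := hcomm
  have hσσ' : sigmaMat n * -(sigmaMat n) = 1 := by
    rw [Matrix.mul_neg, sigma_mul_sigma, neg_neg]
  have hT2 : S * (-(sigmaMat n)) * Sᵀ = -(sigmaMat n) := by
    calc S * (-(sigmaMat n)) * Sᵀ
        = (S * (-(sigmaMat n)) * Sᵀ) * (sigmaMat n * (-(sigmaMat n))) := by
          rw [hσσ', Matrix.mul_one]
      _ = ((S * (-(sigmaMat n)) * Sᵀ) * sigmaMat n) * (-(sigmaMat n)) :=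
          (Matrix.mul_assoc _ _ _).symm
      _ = -(sigmaMat n) := by rw [hT, one_mul]
  have h3 : -(S * sigmaMat n * Sᵀ) = -(sigmaMat n) := by
    rw [← hT2, Matrix.mul_neg, Matrix.neg_mul]
  exact neg_injective h3

lemma free_eq_Xi {n : ℕ} (S : Matrix (Fin n ⊕ Fin n) (Fin n ⊕ Fin n) ℝ)
    (hS : IsSymplectic S) (hα : IsUnit (S.toBlocks₁₁).det) :
    ∃ A B C : Matrix (Fin n) (Fin n) ℝ,
      A.IsSymm ∧ C.IsSymm ∧ IsUnit B.det ∧ S = Xi A B C := by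
  set α := S.toBlocks₁₁ with hαdef
  set β := S.toBlocks₁₂ with hβdef
  set γ := S.toBlocks₂₁ with hγdef
  set δ := S.toBlocks₂₂ with hδdef
  have hSb : S = Matrix.fromBlocks α β γ δ := (Matrix.fromBlocks_toBlocks S).symm
  have hothr := hS.other
  unfold IsSymplectic at hS
  rw [hSb] at hS hothr
  simp only [sigmaMat, Matrix.fromBlocks_transpose, Matrix.fromBlocks_multiply,
    Matrix.mul_zero, Matrix.zero_mul, Matrix.mul_one, Matrix.one_mul,
    Matrix.mul_neg, Matrix.neg_mul, mul_neg_one, neg_one_mul,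
    add_zero, zero_add, Matrix.fromBlocks_inj] at hS hothr
  obtain ⟨e11, e12, e21, e22⟩ := hS
  obtain ⟨f11, f12, f21, f22⟩ := hothr
  have hsym1 : αᵀ * γ = γᵀ * α := by
    rw [neg_add_eq_sub] at e11
    exact sub_eq_zero.1 e11
  have hsym2 : α * βᵀ = β * αᵀ := by
    rw [neg_add_eq_sub] at f11
    exact sub_eq_zero.1 f11
  have hdelta : αᵀ * δ = 1 + γᵀ * β := by
    rw [← e12]; abel
  have hαT : IsUnit αᵀ.det := by rwa [Matrix.det_transpose]
  have hαinv : α * α⁻¹ = 1 := Matrix.mul_nonsing_inv α hα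
  have hinvα : α⁻¹ * α = 1 := Matrix.nonsing_inv_mul α hα
  refine ⟨γ * α⁻¹, α⁻¹, -(α⁻¹ * β), ?_, ?_, ?_, ?_⟩
  · show (γ * α⁻¹)ᵀ = γ * α⁻¹
    calc (γ * α⁻¹)ᵀ = α⁻¹ᵀ * γᵀ := Matrix.transpose_mul _ _
      _ = αᵀ⁻¹ * γᵀ := by rw [Matrix.transpose_nonsing_inv]
      _ = αᵀ⁻¹ * (γᵀ * α) * α⁻¹ := by
          rw [Matrix.mul_assoc αᵀ⁻¹ (γᵀ * α) α⁻¹,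
            Matrix.mul_assoc γᵀ α α⁻¹, hαinv, Matrix.mul_one]
      _ = αᵀ⁻¹ * (αᵀ * γ) * α⁻¹ := by rw [hsym1]
      _ = γ * α⁻¹ := by rw [Matrix.nonsing_inv_mul_cancel_left _ _ hαT]
  · apply Matrix.IsSymm.neg
    show (α⁻¹ * β)ᵀ = α⁻¹ * β
    calc (α⁻¹ * β)ᵀ = βᵀ * α⁻¹ᵀ := Matrix.transpose_mul _ _
      _ = βᵀ * αᵀ⁻¹ := by rw [Matrix.transpose_nonsing_inv]
      _ = α⁻¹ * (α * βᵀ) * αᵀ⁻¹ := by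
          rw [← Matrix.mul_assoc α⁻¹ α βᵀ, hinvα, Matrix.one_mul]
      _ = α⁻¹ * (β * αᵀ) * αᵀ⁻¹ := by rw [hsym2]
      _ = α⁻¹ * β := by
          rw [Matrix.mul_assoc α⁻¹ (β * αᵀ) αᵀ⁻¹,
            Matrix.mul_assoc β αᵀ αᵀ⁻¹, Matrix.mul_nonsing_inv _ hαT, Matrix.mul_one]
  · exact Matrix.isUnit_nonsing_inv_det α hα
  · have hδeq : δ = α⁻¹ᵀ + γ * (α⁻¹ * β) := by
      have h1 : αᵀ * (α⁻¹ᵀ + γ * (α⁻¹ * β)) = 1 + γᵀ * β := by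
        rw [Matrix.mul_add]
        congr 1
        · rw [Matrix.transpose_nonsing_inv, Matrix.mul_nonsing_inv _ hαT]
        · calc αᵀ * (γ * (α⁻¹ * β)) = (αᵀ * γ) * (α⁻¹ * β) := by
                rw [Matrix.mul_assoc]
            _ = (γᵀ * α) * (α⁻¹ * β) := by rw [hsym1]
            _ = γᵀ * β := by
                rw [Matrix.mul_assoc, Matrix.mul_nonsing_inv_cancel_left _ _ hα]
      have h2 : αᵀ * δ = αᵀ * (α⁻¹ᵀ + γ * (α⁻¹ * β)) := by rw [hdelta, h1]
      calc δ = αᵀ⁻¹ * (αᵀ * δ) := (Matrix.nonsing_inv_mul_cancel_left _ _ hαT).symm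
        _ = αᵀ⁻¹ * (αᵀ * (α⁻¹ᵀ + γ * (α⁻¹ * β))) := by rw [h2]
        _ = α⁻¹ᵀ + γ * (α⁻¹ * β) := Matrix.nonsing_inv_mul_cancel_left _ _ hαT
    rw [hSb, Xi, Matrix.nonsing_inv_nonsing_inv α hα, Matrix.fromBlocks_inj]
    refine ⟨rfl, ?_, ?_, ?_⟩
    · rw [Matrix.mul_neg, neg_neg, Matrix.mul_nonsing_inv_cancel_left _ _ hα]
    · rw [Matrix.nonsing_inv_mul_cancel_right _ _ hα]
    · rw [Matrix.nonsing_inv_mul_cancel_right _ _ hα, Matrix.mul_neg, sub_neg_eq_add]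
      exact hδeq

/-- Every symplectic matrix is a product of two matrices of the form `Ξ_{A,B,C}`. -/
theorem isSymplectic_eq_Xi_mul_Xi {n : ℕ} (hn : 1 ≤ n)
    (Ξ : Matrix (Fin n ⊕ Fin n) (Fin n ⊕ Fin n) ℝ) (hΞ : IsSymplectic Ξ) :
    ∃ A₁ B₁ C₁ A₂ B₂ C₂ : Matrix (Fin n) (Fin n) ℝ,
      A₁.IsSymm ∧ C₁.IsSymm ∧ IsUnit B₁.det ∧
      A₂.IsSymm ∧ C₂.IsSymm ∧ IsUnit B₂.det ∧
      Ξ = Xi A₁ B₁ C₁ * Xi A₂ B₂ C₂ := by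
  set α := Ξ.toBlocks₁₁ with hαdef
  set β := Ξ.toBlocks₁₂ with hβdef
  set γ := Ξ.toBlocks₂₁ with hγdef
  set δ := Ξ.toBlocks₂₂ with hδdef
  have hSb : Ξ = Matrix.fromBlocks α β γ δ := (Matrix.fromBlocks_toBlocks Ξ).symm
  -- symmetry relation
  have hsym1 : αᵀ * γ = γᵀ * α := by
    have hS' : Ξᵀ * sigmaMat n * Ξ = sigmaMat n := hΞ
    rw [hSb] at hS'
    simp only [sigmaMat, Matrix.fromBlocks_transpose, Matrix.fromBlocks_multiply,
      Matrix.mul_zero, Matrix.zero_mul, Matrix.mul_one, Matrix.one_mul,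
      Matrix.mul_neg, Matrix.neg_mul, mul_neg_one, neg_one_mul,
      add_zero, zero_add, Matrix.fromBlocks_inj] at hS'
    obtain ⟨e11, -, -, -⟩ := hS'
    rw [neg_add_eq_sub] at e11
    exact sub_eq_zero.1 e11
  -- kernel condition
  have hdet : IsUnit Ξ.det := hΞ.det_isUnit
  have hrank : ∀ x : Fin n → ℝ, α *ᵥ x = 0 → γ *ᵥ x = 0 → x = 0 := by
    intro x hαx hγx
    have hy : Ξ *ᵥ (Sum.elim x 0) = 0 := by
      rw [hSb, Matrix.fromBlocks_mulVec]
      simp [hαx, hγx]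
    have hx0 : Sum.elim x (0 : Fin n → ℝ) = 0 := by
      have h1 : Ξ⁻¹ *ᵥ (Ξ *ᵥ Sum.elim x 0) = Sum.elim x 0 := by
        rw [Matrix.mulVec_mulVec, Matrix.nonsing_inv_mul _ hdet, Matrix.one_mulVec]
      rw [hy, Matrix.mulVec_zero] at h1
      exact h1.symm
    funext i
    exact congrFun hx0 (Sum.inl i)
  obtain ⟨t, ht⟩ := pencil_lemma α γ hsym1 hrank
  set C₁ : Matrix (Fin n) (Fin n) ℝ := t • 1 with hC₁
  set W : Matrix (Fin n ⊕ Fin n) (Fin n ⊕ Fin n) ℝ := Matrix.fromBlocks 1 C₁ 0 1 with hWdef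
  have hC₁symm : C₁ᵀ = C₁ := by rw [hC₁, Matrix.transpose_smul, Matrix.transpose_one]
  have hP : Xi 0 1 C₁ = Matrix.fromBlocks 1 (-C₁) 0 1 := by
    rw [Xi]
    simp [inv_one]
  have hW : IsSymplectic W := by
    show Wᵀ * sigmaMat n * W = sigmaMat n
    rw [hWdef]
    simp only [sigmaMat, Matrix.fromBlocks_transpose, Matrix.fromBlocks_multiply,
      Matrix.mul_zero, Matrix.zero_mul, Matrix.mul_one, Matrix.one_mul,
      Matrix.mul_neg, Matrix.neg_mul, mul_neg_one, neg_one_mul,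
      Matrix.transpose_zero, Matrix.transpose_one, hC₁symm,
      add_zero, zero_add, Matrix.fromBlocks_inj]
    refine ⟨?_, ?_, ?_, ?_⟩ <;> simp
  have hQsymp : IsSymplectic (W * Ξ) := by
    show (W * Ξ)ᵀ * sigmaMat n * (W * Ξ) = sigmaMat n
    have hW' : Wᵀ * sigmaMat n * W = sigmaMat n := hW
    have hΞ' : Ξᵀ * sigmaMat n * Ξ = sigmaMat n := hΞ
    calc (W * Ξ)ᵀ * sigmaMat n * (W * Ξ)
        = Ξᵀ * (Wᵀ * sigmaMat n * W) * Ξ := by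
          rw [Matrix.transpose_mul]; noncomm_ring
      _ = sigmaMat n := by rw [hW', hΞ']
  have hQblock : (W * Ξ).toBlocks₁₁ = α + t • γ := by
    conv_lhs => rw [hSb, hWdef, Matrix.fromBlocks_multiply]
    rw [Matrix.toBlocks_fromBlocks₁₁, hC₁, Matrix.one_mul, Matrix.smul_mul, Matrix.one_mul]
  have hQdet : IsUnit ((W * Ξ).toBlocks₁₁).det := by rw [hQblock]; exact ht
  obtain ⟨A₂, B₂, C₂, hA₂, hC₂, hB₂, hQeq⟩ := free_eq_Xi (W * Ξ) hQsymp hQdet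
  refine ⟨0, 1, C₁, A₂, B₂, C₂, ?_, ?_, ?_, hA₂, hC₂, hB₂, ?_⟩
  · show (0 : Matrix (Fin n) (Fin n) ℝ)ᵀ = 0
    simp
  · exact hC₁symm
  · simp
  · have hPW : Matrix.fromBlocks (1 : Matrix (Fin n) (Fin n) ℝ) (-C₁) (0 : Matrix (Fin n) (Fin n) ℝ) (1 : Matrix (Fin n) (Fin n) ℝ) * W = 1 := by
      rw [hWdef, Matrix.fromBlocks_multiply]
      rw [← Matrix.fromBlocks_one (l := Fin n) (m := Fin n) (α := ℝ)]
      congr 1 <;> simp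
    rw [← hQeq, hP, ← Matrix.mul_assoc, hPW, Matrix.one_mul]

end
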